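/- arXiv:2511.15623 — 2 statements merged into one kernel-verified Lean document; each statement's English description precedes it below -/
import Mathlib

section
/- With the relation extensions P₁, …, P_k pairwise disjoint, a tuple t ∈ D belongs to the repair core Core(D) if and only if t participates in no witness of Q, i.e., there is no f with W(f), f(j) ∈ P_j for all j, and f(i) = t for some i. -/
open Classical

variable {α : Type*} [DecidableEq α] {k : ℕ}

/-- The database: the union of the relation extensions `P 1, …, P k`. -/
def DB (P : Fin k → Finset α) : Finset α :=
  Finset.univ.biUnion P

/-- A subset `D'` satisfies the query: there is a witness `f` with
`f i ∈ Pᵢ ∩ D'` for every atom `i`, jointly satisfying the join conditions `W`. -/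
def Sat (P : Fin k → Finset α) (W : (Fin k → α) → Prop) (D' : Finset α) : Prop :=
  ∃ f : Fin k → α, (∀ i, f i ∈ P i ∩ D') ∧ W f

/-- `D'` is an S-repair of the database w.r.t. the denial constraint `¬Q`:
a subset-maximal subset not satisfying the query. -/
def IsSRepair (P : Fin k → Finset α) (W : (Fin k → α) → Prop) (D' : Finset α) : Prop :=
  D' ⊆ DB P ∧ ¬ Sat P W D' ∧ ∀ D'', D'' ⊆ DB P → D' ⊂ D'' → Sat P W D''

/-- The repair core: the intersection of all S-repairs of the database. -/
noncomputable def Core (P : Fin k → Finset α) (W : (Fin k → α) → Prop) : Finset α :=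
  (DB P).filter (fun t => ∀ D', IsSRepair P W D' → t ∈ D')

/-- `Rᵢ`: the tuples of `Pᵢ` participating in some witness of the query. -/
noncomputable def Rset (P : Fin k → Finset α) (W : (Fin k → α) → Prop) (i : Fin k) :
    Finset α :=
  (P i).filter (fun t => ∃ f : Fin k → α, f i = t ∧ (∀ j, f j ∈ P j) ∧ W f)

/-- `S` is a sufficient-set: `S ⊆ D` and `sat(S)`. -/
def SuffSet (P : Fin k → Finset α) (W : (Fin k → α) → Prop) (S : Finset α) : Prop :=
  S ⊆ DB P ∧ Sat P W S

/-- Minimal sufficient-set (MSS). -/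
def MSSuff (P : Fin k → Finset α) (W : (Fin k → α) → Prop) (S : Finset α) : Prop :=
  SuffSet P W S ∧ ∀ S' ⊂ S, ¬ SuffSet P W S'

/-- `N` is a necessary-set: `N ⊆ D` and `¬ sat(D ∖ N)`. -/
def NecSet (P : Fin k → Finset α) (W : (Fin k → α) → Prop) (N : Finset α) : Prop :=
  N ⊆ DB P ∧ ¬ Sat P W (DB P \ N)

/-- Minimal necessary-set (MNS). -/
def MNS (P : Fin k → Finset α) (W : (Fin k → α) → Prop) (N : Finset α) : Prop :=
  NecSet P W N ∧ ∀ N' ⊂ N, ¬ NecSet P W N'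

/-!
A tuple lying on no witness is irrelevant to satisfaction: a witness of `Q` inside
`D' ∪ {t}` avoids `t`, so adding `t` to a repair keeps it consistent, and maximality puts
`t` in every repair. Conversely, if `t = f i` for a witness `f`, then by disjointness the
other tuples `f j` (`j ≠ i`) contain nothing from `Pᵢ`, so they form a consistent set; any
repair extending it must miss `t`, since otherwise it would contain the whole witness `f`.
-/

theorem exists_isSRepair_superset {P : Fin k → Finset α} {W : (Fin k → α) → Prop}
    {A : Finset α} (hA : A ⊆ DB P) (hAsat : ¬ Sat P W A) :
    ∃ D', IsSRepair P W D' ∧ A ⊆ D' := by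
  let consistent := (DB P).powerset.filter fun B => ¬ Sat P W B
  obtain ⟨D', hAD', hmax⟩ :=
    consistent.exists_le_maximal (Finset.mem_filter.2 ⟨Finset.mem_powerset.2 hA, hAsat⟩)
  obtain ⟨hD'DB, hD'sat⟩ := Finset.mem_filter.1 hmax.prop
  refine ⟨D', ⟨Finset.mem_powerset.1 hD'DB, hD'sat, fun D'' hD'' hlt => ?_⟩, hAD'⟩
  by_contra hD''sat
  exact hmax.not_gt (Finset.mem_filter.2 ⟨Finset.mem_powerset.2 hD'', hD''sat⟩) hlt

theorem Sat.of_insert_of_no_witness {P : Fin k → Finset α} {W : (Fin k → α) → Prop}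
    {D' : Finset α} {t : α} (hno : ¬ ∃ f : Fin k → α, W f ∧ (∀ j, f j ∈ P j) ∧ ∃ i, f i = t)
    (hsat : Sat P W (insert t D')) : Sat P W D' := by
  obtain ⟨f, hf, hW⟩ := hsat
  refine ⟨f, fun j => Finset.mem_inter.2 ⟨(Finset.mem_inter.1 (hf j)).1, ?_⟩, hW⟩
  refine (Finset.mem_insert.1 (Finset.mem_inter.1 (hf j)).2).resolve_left fun hfj => ?_
  exact hno ⟨f, hW, fun j => (Finset.mem_inter.1 (hf j)).1, j, hfj⟩

theorem IsSRepair.mem_of_no_witness {P : Fin k → Finset α} {W : (Fin k → α) → Prop}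
    {D' : Finset α} {t : α} (hD' : IsSRepair P W D') (ht : t ∈ DB P)
    (hno : ¬ ∃ f : Fin k → α, W f ∧ (∀ j, f j ∈ P j) ∧ ∃ i, f i = t) : t ∈ D' := by
  by_contra htD'
  exact hD'.2.1 <| Sat.of_insert_of_no_witness hno <|
    hD'.2.2 _ (Finset.insert_subset ht hD'.1) (Finset.ssubset_insert htD')

theorem image_subset_DB {P : Fin k → Finset α} {f : Fin k → α} (hf : ∀ j, f j ∈ P j)
    (s : Finset (Fin k)) : s.image f ⊆ DB P := by
  intro x hx
  obtain ⟨j, -, rfl⟩ := Finset.mem_image.1 hx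
  exact Finset.mem_biUnion.2 ⟨j, Finset.mem_univ j, hf j⟩

theorem not_sat_image_erase {P : Fin k → Finset α}
    (hdisj : Pairwise fun i j => Disjoint (P i) (P j))
    (W : (Fin k → α) → Prop) {f : Fin k → α} (hf : ∀ j, f j ∈ P j) (i : Fin k) :
    ¬ Sat P W ((Finset.univ.erase i).image f) := by
  rintro ⟨g, hg, -⟩
  obtain ⟨hgP, hgS⟩ := Finset.mem_inter.1 (hg i)
  obtain ⟨j, hj, hfj⟩ := Finset.mem_image.1 hgS
  exact Finset.disjoint_left.1 (hdisj (Finset.ne_of_mem_erase hj)) (hfj ▸ hf j) hgP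

theorem apply_notMem_of_image_erase_subset {P : Fin k → Finset α}
    {W : (Fin k → α) → Prop} {f : Fin k → α} (hf : ∀ j, f j ∈ P j) (hW : W f) {i : Fin k}
    {D' : Finset α} (hD'sat : ¬ Sat P W D') (hsub : (Finset.univ.erase i).image f ⊆ D') :
    f i ∉ D' := by
  intro hfi
  refine hD'sat ⟨f, fun j => Finset.mem_inter.2 ⟨hf j, ?_⟩, hW⟩
  rcases eq_or_ne j i with rfl | hji
  · exact hfi
  · exact hsub (Finset.mem_image_of_mem f (Finset.mem_erase.2 ⟨hji, Finset.mem_univ j⟩))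

theorem stmt9_general (P : Fin k → Finset α)
    (hdisj : ∀ i j : Fin k, i ≠ j → Disjoint (P i) (P j))
    (W : (Fin k → α) → Prop)
    (t : α) (ht : t ∈ DB P) :
    t ∈ Core P W ↔
      ¬ ∃ f : Fin k → α, W f ∧ (∀ j, f j ∈ P j) ∧ ∃ i, f i = t := by
  constructor
  · rintro hcore ⟨f, hW, hf, i, rfl⟩
    obtain ⟨D', hD', hsub⟩ :=
      exists_isSRepair_superset (image_subset_DB hf _) (not_sat_image_erase hdisj W hf i)
    exact apply_notMem_of_image_erase_subset hf hW hD'.2.1 hsub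
      ((Finset.mem_filter.1 hcore).2 D' hD')
  · exact fun hno => Finset.mem_filter.2 ⟨ht, fun D' hD' => hD'.mem_of_no_witness ht hno⟩

theorem stmt9 (hk : 1 ≤ k) (P : Fin k → Finset α)
    (hdisj : ∀ i j : Fin k, i ≠ j → Disjoint (P i) (P j))
    (W : (Fin k → α) → Prop) (hD : Sat P W (DB P))
    (t : α) (ht : t ∈ DB P) :
    t ∈ Core P W ↔
      ¬ ∃ f : Fin k → α, W f ∧ (∀ j, f j ∈ P j) ∧ ∃ i, f i = t :=
  stmt9_general P hdisj W t ht
end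

section
/- With the relation extensions P₁, …, P_k pairwise disjoint: for every t ∈ D ∖ Core(D), the minimum cardinality of a sufficient-set for Q containing t equals k (so the sufficiency-degree of t is 1/k), while for every t ∈ Core(D) no minimal sufficient-set contains t (so the sufficiency-degree of t is 0). -/
open Classical

variable {α : Type*} [DecidableEq α] {k : ℕ}

lemma sat_mono {α : Type*} [DecidableEq α] {k : ℕ} {P : Fin k → Finset α}
    {W : (Fin k → α) → Prop} {A B : Finset α}
    (h : A ⊆ B) (hA : Sat P W A) : Sat P W B := by
  obtain ⟨f, hf, hW⟩ := hA
  exact ⟨f, fun i => Finset.mem_inter.2 ⟨(Finset.mem_inter.1 (hf i)).1,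
    h (Finset.mem_inter.1 (hf i)).2⟩, hW⟩

lemma witness_inj {α : Type*} [DecidableEq α] {k : ℕ} {P : Fin k → Finset α}
    (hdisj : ∀ i j : Fin k, i ≠ j → Disjoint (P i) (P j))
    {f : Fin k → α} (hf : ∀ i, f i ∈ P i) : Function.Injective f := by
  intro i j hij
  by_contra hne
  exact (Finset.disjoint_left.1 (hdisj i j hne)) (hf i) (hij ▸ hf j)

theorem stmt17 (hk : 1 ≤ k) (P : Fin k → Finset α)
    (hdisj : ∀ i j : Fin k, i ≠ j → Disjoint (P i) (P j))
    (W : (Fin k → α) → Prop) (hD : Sat P W (DB P)) :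
    (∀ t ∈ DB P \ Core P W,
      IsLeast {n : ℕ | ∃ S : Finset α, SuffSet P W S ∧ t ∈ S ∧ S.card = n} k) ∧
    (∀ t ∈ Core P W, ¬ ∃ S, MSSuff P W S ∧ t ∈ S) := by
  constructor
  · intro t ht
    rw [Finset.mem_sdiff] at ht
    obtain ⟨htD, htC⟩ := ht
    have hrep : ∃ D', IsSRepair P W D' ∧ t ∉ D' := by
      by_contra h
      push_neg at h
      exact htC (Finset.mem_filter.2 ⟨htD, fun D' hR => h D' hR⟩)
    obtain ⟨D', hR, htD'⟩ := hrep
    have hsat : Sat P W (insert t D') :=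
      hR.2.2 _ (Finset.insert_subset htD hR.1) (Finset.ssubset_insert htD')
    obtain ⟨f, hf, hW⟩ := hsat
    have hfP : ∀ i, f i ∈ P i := fun i => (Finset.mem_inter.1 (hf i)).1
    have hinj := witness_inj hdisj hfP
    have hex : ∃ i, f i = t := by
      by_contra h
      push_neg at h
      apply hR.2.1
      refine ⟨f, fun i => Finset.mem_inter.2 ⟨hfP i, ?_⟩, hW⟩
      rcases Finset.mem_insert.1 (Finset.mem_inter.1 (hf i)).2 with h' | h'
      · exact absurd h' (h i)
      · exact h'
    obtain ⟨i0, hi0⟩ := hex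
    constructor
    · refine ⟨Finset.image f Finset.univ, ⟨?_, f, fun i => Finset.mem_inter.2
        ⟨hfP i, Finset.mem_image.2 ⟨i, Finset.mem_univ i, rfl⟩⟩, hW⟩,
        Finset.mem_image.2 ⟨i0, Finset.mem_univ i0, hi0⟩, ?_⟩
      · intro x hx
        obtain ⟨i, _, rfl⟩ := Finset.mem_image.1 hx
        exact Finset.mem_biUnion.2 ⟨i, Finset.mem_univ i, hfP i⟩
      · rw [Finset.card_image_of_injective _ hinj, Finset.card_univ, Fintype.card_fin]
    · rintro n ⟨S', ⟨_, g, hg, hWg⟩, _, rfl⟩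
      have hgP : ∀ i, g i ∈ P i := fun i => (Finset.mem_inter.1 (hg i)).1
      have hsub : Finset.image g Finset.univ ⊆ S' := by
        intro x hx
        obtain ⟨i, _, rfl⟩ := Finset.mem_image.1 hx
        exact (Finset.mem_inter.1 (hg i)).2
      calc k = (Finset.image g Finset.univ).card := by
              rw [Finset.card_image_of_injective _ (witness_inj hdisj hgP),
                Finset.card_univ, Fintype.card_fin]
        _ ≤ S'.card := Finset.card_le_card hsub
  · rintro t htC ⟨S, ⟨⟨hSsub, hSsat⟩, hSmin⟩, htS⟩
    have htDB := (Finset.mem_filter.1 htC).1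
    have hall := (Finset.mem_filter.1 htC).2
    set F := ((DB P \ {t}).powerset.filter
      (fun D' => S.erase t ⊆ D' ∧ ¬ Sat P W D')) with hF
    have heraseSub : S.erase t ⊆ DB P \ {t} := by
      intro x hx
      rw [Finset.mem_erase] at hx
      exact Finset.mem_sdiff.2 ⟨hSsub hx.2, by simpa using hx.1⟩
    have hmemF : S.erase t ∈ F := by
      refine Finset.mem_filter.2 ⟨Finset.mem_powerset.2 heraseSub, subset_rfl, ?_⟩
      intro hsat
      exact hSmin (S.erase t) (Finset.erase_ssubset htS)
        ⟨(Finset.erase_subset _ _).trans hSsub, hsat⟩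
    obtain ⟨D', hD'F, hmax⟩ := F.exists_max_image Finset.card ⟨_, hmemF⟩
    rw [hF, Finset.mem_filter, Finset.mem_powerset] at hD'F
    obtain ⟨hD'sub, hD'e, hD'ns⟩ := hD'F
    have hrep : IsSRepair P W D' := by
      refine ⟨hD'sub.trans Finset.sdiff_subset, hD'ns, ?_⟩
      intro D'' hD''sub hD''ss
      by_contra hns
      by_cases ht'' : t ∈ D''
      · exact hns (sat_mono (by
          intro x hx
          by_cases hxt : x = t
          · exact hxt ▸ ht''
          · exact hD''ss.1 (hD'e (Finset.mem_erase.2 ⟨hxt, hx⟩))) hSsat)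
      · have hmemF'' : D'' ∈ F := by
          refine Finset.mem_filter.2 ⟨Finset.mem_powerset.2 ?_,
            hD'e.trans hD''ss.1, hns⟩
          intro x hx
          exact Finset.mem_sdiff.2 ⟨hD''sub hx, by
            simp only [Finset.mem_singleton]
            rintro rfl
            exact ht'' hx⟩
        exact absurd (hmax _ hmemF'') (not_le.2 (Finset.card_lt_card hD''ss))
    have := hall D' hrep
    exact absurd (Finset.mem_sdiff.1 (hD'sub this)).2 (by simp)
end
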